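/- Let Ω = B(0,R) ⊂ ℝ^d. Let P, Q ∈ P(P(Ω)), let μ_P be a minimizer of F_P and μ_Q a minimizer of F_Q. Assume F_P satisfies the strong convexity estimate at μ_P: α · W₂⁶(μ_P, ν) ≤ C · (F_P(ν) − F_P(μ_P)) for all ν ∈ P(Ω) (with constants α, C > 0, as holds under Assumption (A) via the dual optimal potentials). Then α · W₂⁶(μ_P, μ_Q) ≤ C · ⟨ ½(W₂²(·, μ_Q) − W₂²(·, μ_P)), P − Q ⟩, where ⟨g, P − Q⟩ = ∫g dP − ∫g dQ for g : P(Ω) → ℝ. -/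

import Mathlib

noncomputable section

open MeasureTheory Metric Set
open scoped ENNReal NNReal RealInnerProductSpace

/-- The set of transport plans (couplings) between two measures. -/
def Couplings {α β : Type*} [MeasurableSpace α] [MeasurableSpace β]
    (ρ : Measure α) (μ : Measure β) : Set (Measure (α × β)) :=
  {γ | γ.map Prod.fst = ρ ∧ γ.map Prod.snd = μ}

/-- The 2-Wasserstein distance between two measures on a normed space. -/
def W2 {α : Type*} [MeasurableSpace α] [NormedAddCommGroup α] (ρ μ : Measure α) : ℝ :=
  Real.sqrt (sInf ((fun γ : Measure (α × α) => ∫ p, ‖p.1 - p.2‖ ^ 2 ∂γ) '' Couplings ρ μ))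

/-- The 1-Wasserstein distance between measures on the space of measures,
with ground cost `W2`. -/
def Wc1 {α : Type*} [MeasurableSpace α] [NormedAddCommGroup α]
    (P Q : Measure (Measure α)) : ℝ :=
  sInf ((fun γ : Measure (Measure α × Measure α) => ∫ p, W2 p.1 p.2 ∂γ) '' Couplings P Q)

/-- The variance functional `F_P`. -/
def Fvar {α : Type*} [MeasurableSpace α] [NormedAddCommGroup α]
    (P : Measure (Measure α)) (μ : Measure α) : ℝ :=
  (1 / 2) * ∫ ρ, W2 ρ μ ^ 2 ∂P

abbrev Euc (d : ℕ) : Type := EuclideanSpace ℝ (Fin d)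

/-- `ρ` is a Borel probability measure concentrated on `Ω`. -/
def ProbOn {d : ℕ} (Ω : Set (Euc d)) (ρ : Measure (Euc d)) : Prop :=
  IsProbabilityMeasure ρ ∧ ρ Ωᶜ = 0

/-- `P` is a Borel probability measure on the probability measures over `Ω`. -/
def PProbOn {d : ℕ} (Ω : Set (Euc d)) (P : Measure (Measure (Euc d))) : Prop :=
  IsProbabilityMeasure P ∧ P {ρ | ¬ ProbOn Ω ρ} = 0

/-- `μ` is a Wasserstein barycenter of `P` (a minimizer of `Fvar P` over `P(Ω)`). -/
def IsBary {d : ℕ} (Ω : Set (Euc d)) (P : Measure (Measure (Euc d)))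
    (μ : Measure (Euc d)) : Prop :=
  ProbOn Ω μ ∧ ∀ ν, ProbOn Ω ν → Fvar P μ ≤ Fvar P ν

/-!
Since `μ_Q` minimises `F_Q`, `F_Q(μ_Q) - F_Q(μ_P) ≤ 0`, while strong convexity at `ν = μ_Q` gives
`α W₂⁶(μ_P, μ_Q) ≤ C (F_P(μ_Q) - F_P(μ_P))`; subtracting gives the bound once the pairing splits
as `(F_P(μ_Q) - F_P(μ_P)) - (F_Q(μ_Q) - F_Q(μ_P))`.

The splitting needs `ρ ↦ W₂²(ρ, ν)`, which is bounded by `(2R)²`, to be measurable for the Giry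
σ-algebra on measures supported in the ball. Quantise the ball by a measurable map `X` onto
finitely many centres at distance `≤ δ`. A rational sub-plan between the cell masses of `ρ` and
`ν`, completed by an independent coupling of the leftover mass, bounds `W₂²(ρ, ν)` from above;
conversely the cell masses of a near-optimal coupling are approximated by such a plan up to
`16δ(R + δ)`. Feasibility of a plan is a measurable condition on `ρ`, so `W₂²(·, ν)` is a limit
of countable infima of measurable functions.
-/

open ProbabilityTheory

section Couplings

variable {α β : Type*} [MeasurableSpace α] [MeasurableSpace β]
  {ρ : Measure α} {μ : Measure β} {γ : Measure (α × β)}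

lemma measure_univ_of_mem_couplings (h : γ ∈ Couplings ρ μ) : γ univ = ρ univ := by
  rw [← h.1, Measure.map_apply measurable_fst MeasurableSet.univ, preimage_univ]

lemma prod_mem_couplings [IsProbabilityMeasure ρ] [IsProbabilityMeasure μ] :
    ρ.prod μ ∈ Couplings ρ μ := by
  constructor <;> simp [Measure.map_fst_prod, Measure.map_snd_prod]

lemma inv_measure_univ_mul_smul (ν : Measure α) [IsFiniteMeasure ν] :
    ((ν univ)⁻¹ * ν univ) • ν = ν := by
  rcases eq_or_ne (ν univ) 0 with h0 | h0
  · rw [Measure.measure_univ_eq_zero.1 h0, smul_zero]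
  · rw [ENNReal.inv_mul_cancel h0 (measure_ne_top ν univ), one_smul]

lemma isFiniteMeasure_of_map_fst_le [IsFiniteMeasure ρ] (h : γ.map Prod.fst ≤ ρ) :
    IsFiniteMeasure γ := by
  refine ⟨lt_of_le_of_lt ?_ (measure_lt_top ρ univ)⟩
  simpa [Measure.map_apply measurable_fst MeasurableSet.univ] using h univ

/-- Complete `γ` by the normalised product of the two marginal defects. -/
lemma exists_add_mem_couplings [IsFiniteMeasure ρ] [IsFiniteMeasure μ]
    (hmass : ρ univ = μ univ) (h₁ : γ.map Prod.fst ≤ ρ) (h₂ : γ.map Prod.snd ≤ μ) :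
    ∃ γ' : Measure (α × β), γ + γ' ∈ Couplings ρ μ := by
  have := isFiniteMeasure_of_map_fst_le h₁
  set ρ' := ρ - γ.map Prod.fst
  set μ' := μ - γ.map Prod.snd
  have hρ' : ρ' univ = ρ univ - γ univ := by
    rw [Measure.sub_apply MeasurableSet.univ h₁,
      Measure.map_apply measurable_fst MeasurableSet.univ, preimage_univ]
  have hμ' : μ' univ = ρ' univ := by
    rw [Measure.sub_apply MeasurableSet.univ h₂,
      Measure.map_apply measurable_snd MeasurableSet.univ, preimage_univ, hρ', hmass]
  refine ⟨(ρ' univ)⁻¹ • ρ'.prod μ', ?_, ?_⟩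
  · rw [Measure.map_add _ _ measurable_fst, Measure.map_smul, Measure.map_fst_prod, hμ',
      smul_smul, inv_measure_univ_mul_smul, add_comm, Measure.sub_add_cancel_of_le h₁]
  · rw [Measure.map_add _ _ measurable_snd, Measure.map_smul, Measure.map_snd_prod, ← hμ',
      smul_smul, inv_measure_univ_mul_smul, add_comm, Measure.sub_add_cancel_of_le h₂]

end Couplings

lemma norm_sub_le_of_mem_closedBall {E : Type*} [NormedAddCommGroup E] {R : ℝ} {x y : E}
    (hx : x ∈ closedBall (0 : E) R) (hy : y ∈ closedBall (0 : E) R) : ‖x - y‖ ≤ 2 * R := by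
  rw [mem_closedBall_zero_iff] at hx hy
  linarith [norm_sub_le x y]

section TransportCost

variable {E : Type*} [NormedAddCommGroup E] [MeasurableSpace E]
  {ρ μ : Measure E} {γ : Measure (E × E)} {R : ℝ}

def transportCost (γ : Measure (E × E)) : ℝ := ∫ p, ‖p.1 - p.2‖ ^ 2 ∂γ

def minCost (ρ μ : Measure E) : ℝ := sInf (transportCost '' Couplings ρ μ)

lemma transportCost_nonneg (γ : Measure (E × E)) : 0 ≤ transportCost γ :=
  integral_nonneg fun _ => by positivity

lemma minCost_nonneg (ρ μ : Measure E) : 0 ≤ minCost ρ μ :=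
  Real.sInf_nonneg (by rintro _ ⟨γ, -, rfl⟩; exact transportCost_nonneg γ)

lemma W2_sq_eq_minCost (ρ μ : Measure E) : W2 ρ μ ^ 2 = minCost ρ μ :=
  Real.sq_sqrt (minCost_nonneg ρ μ)

lemma minCost_le_transportCost (h : γ ∈ Couplings ρ μ) : minCost ρ μ ≤ transportCost γ :=
  csInf_le ⟨0, by rintro _ ⟨γ', -, rfl⟩; exact transportCost_nonneg γ'⟩ ⟨γ, h, rfl⟩

lemma exists_mem_couplings_transportCost_lt (hne : (Couplings ρ μ).Nonempty) {t : ℝ}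
    (h : minCost ρ μ < t) : ∃ γ ∈ Couplings ρ μ, transportCost γ < t := by
  obtain ⟨_, ⟨γ, hγ, rfl⟩, hlt⟩ := exists_lt_of_csInf_lt (hne.image transportCost) h
  exact ⟨γ, hγ, hlt⟩

lemma ae_mem_closedBall_of_map_le (hρ : ρ (closedBall 0 R)ᶜ = 0) (hμ : μ (closedBall 0 R)ᶜ = 0)
    (h₁ : γ.map Prod.fst ≤ ρ) (h₂ : γ.map Prod.snd ≤ μ) :
    ∀ᵐ p ∂γ, p.1 ∈ closedBall (0 : E) R ∧ p.2 ∈ closedBall (0 : E) R :=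
  (ae_of_ae_map measurable_fst.aemeasurable
      ((Measure.absolutelyContinuous_of_le h₁).ae_le (ae_iff.2 hρ))).and
    (ae_of_ae_map measurable_snd.aemeasurable
      ((Measure.absolutelyContinuous_of_le h₂).ae_le (ae_iff.2 hμ)))

variable [OpensMeasurableSpace E] [SecondCountableTopology E]

lemma integrable_norm_sub_sq [IsFiniteMeasure γ] {b : ℝ} (h : ∀ᵐ p ∂γ, ‖p.1 - p.2‖ ≤ b) :
    Integrable (fun p : E × E => ‖p.1 - p.2‖ ^ 2) γ := by
  refine Integrable.mono' (integrable_const (b ^ 2))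
    ((continuous_fst.sub continuous_snd).norm.pow 2).aestronglyMeasurable ?_
  filter_upwards [h] with p hp
  rw [Real.norm_of_nonneg (by positivity)]
  exact pow_le_pow_left₀ (norm_nonneg _) hp 2

lemma transportCost_le_of_ae_norm_sub_le [IsFiniteMeasure γ] {b : ℝ}
    (h : ∀ᵐ p ∂γ, ‖p.1 - p.2‖ ≤ b) : transportCost γ ≤ b ^ 2 * γ.real univ := by
  calc transportCost γ ≤ ∫ _, b ^ 2 ∂γ :=
        integral_mono_ae (integrable_norm_sub_sq h) (integrable_const _)
          (h.mono fun p hp => pow_le_pow_left₀ (norm_nonneg _) hp 2)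
    _ = b ^ 2 * γ.real univ := by rw [integral_const, smul_eq_mul, mul_comm]

lemma minCost_le_transportCost_add [IsProbabilityMeasure ρ] [IsProbabilityMeasure μ]
    (hρ : ρ (closedBall 0 R)ᶜ = 0) (hμ : μ (closedBall 0 R)ᶜ = 0)
    (h₁ : γ.map Prod.fst ≤ ρ) (h₂ : γ.map Prod.snd ≤ μ) :
    minCost ρ μ ≤ transportCost γ + (2 * R) ^ 2 * (1 - γ.real univ) := by
  have := isFiniteMeasure_of_map_fst_le h₁
  obtain ⟨γ', hγ'⟩ := exists_add_mem_couplings (by simp) h₁ h₂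
  have hle : γ' ≤ γ + γ' := Measure.le_add_left le_rfl
  have : IsProbabilityMeasure (γ + γ') :=
    ⟨by rw [measure_univ_of_mem_couplings hγ', measure_univ]⟩
  have := isFiniteMeasure_of_le (γ + γ') hle
  have hK' := ae_mem_closedBall_of_map_le hρ hμ
    ((Measure.map_mono hle measurable_fst).trans hγ'.1.le)
    ((Measure.map_mono hle measurable_snd).trans hγ'.2.le)
  have hb : ∀ᵐ p ∂γ', ‖p.1 - p.2‖ ≤ 2 * R :=
    hK'.mono fun p hp => norm_sub_le_of_mem_closedBall hp.1 hp.2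
  have hγ : ∀ᵐ p ∂γ, ‖p.1 - p.2‖ ≤ 2 * R :=
    (ae_mem_closedBall_of_map_le hρ hμ h₁ h₂).mono fun p hp =>
      norm_sub_le_of_mem_closedBall hp.1 hp.2
  have hmass : γ.real univ + γ'.real univ = 1 := by
    rw [← measureReal_add_apply, measureReal_def, measure_univ_of_mem_couplings hγ',
      measure_univ, ENNReal.toReal_one]
  calc minCost ρ μ ≤ transportCost (γ + γ') := minCost_le_transportCost hγ'
    _ = transportCost γ + transportCost γ' :=
        integral_add_measure (integrable_norm_sub_sq hγ) (integrable_norm_sub_sq hb)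
    _ ≤ transportCost γ + (2 * R) ^ 2 * γ'.real univ := by
        gcongr; exact transportCost_le_of_ae_norm_sub_le hb
    _ = _ := by rw [← hmass, add_sub_cancel_left]

lemma minCost_le_sq [IsProbabilityMeasure ρ] [IsProbabilityMeasure μ]
    (hρ : ρ (closedBall 0 R)ᶜ = 0) (hμ : μ (closedBall 0 R)ᶜ = 0) :
    minCost ρ μ ≤ (2 * R) ^ 2 := by
  simpa [transportCost] using
    minCost_le_transportCost_add (γ := 0) hρ hμ
      (by rw [Measure.map_zero]; exact Measure.zero_le ρ)
      (by rw [Measure.map_zero]; exact Measure.zero_le μ)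

end TransportCost

lemma abs_norm_sub_sub_norm_sub_le {E : Type*} [NormedAddCommGroup E] {δ : ℝ} {x y a b : E}
    (hx : ‖x - a‖ ≤ δ) (hy : ‖y - b‖ ≤ δ) : |‖x - y‖ - ‖a - b‖| ≤ 2 * δ := by
  have := dist_dist_dist_le x y a b
  rw [Real.dist_eq, dist_eq_norm, dist_eq_norm, dist_eq_norm, dist_eq_norm] at this
  linarith

section SubPlans

variable {α : Type*} [MeasurableSpace α] {ι : Type*} [Fintype ι]
  {ρ μ : Measure α} {γ : Measure (α × α)} {X : α → ι} {q π : ι × ι → ℝ}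

def IsSubPlan (ρ μ : Measure α) (X : α → ι) (q : ι × ι → ℝ) : Prop :=
  (∀ p, 0 ≤ q p) ∧ (∀ i, ∑ j, q (i, j) ≤ ρ.real (X ⁻¹' {i})) ∧
    ∀ j, ∑ i, q (i, j) ≤ μ.real (X ⁻¹' {j})

def discretePlan (ρ μ : Measure α) (X : α → ι) (q : ι × ι → ℝ) : Measure (α × α) :=
  ∑ p, ENNReal.ofReal (q p) • (ρ[|X ← p.1]).prod (μ[|X ← p.2])

lemma IsSubPlan.mono (hπ : IsSubPlan ρ μ X π) (h0 : ∀ p, 0 ≤ q p) (hle : ∀ p, q p ≤ π p) :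
    IsSubPlan ρ μ X q :=
  ⟨h0, fun i => (Finset.sum_le_sum fun _ _ => hle _).trans (hπ.2.1 i),
    fun j => (Finset.sum_le_sum fun _ _ => hle _).trans (hπ.2.2 j)⟩

lemma IsSubPlan.sum_ofReal_fst_le [IsFiniteMeasure ρ] (hq : IsSubPlan ρ μ X q) (i : ι) :
    ∑ j, ENNReal.ofReal (q (i, j)) ≤ ρ (X ⁻¹' {i}) := by
  rw [← ENNReal.ofReal_sum_of_nonneg fun j _ => hq.1 _]
  exact ENNReal.ofReal_le_of_le_toReal (hq.2.1 i)

lemma IsSubPlan.sum_ofReal_snd_le [IsFiniteMeasure μ] (hq : IsSubPlan ρ μ X q) (j : ι) :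
    ∑ i, ENNReal.ofReal (q (i, j)) ≤ μ (X ⁻¹' {j}) := by
  rw [← ENNReal.ofReal_sum_of_nonneg fun i _ => hq.1 _]
  exact ENNReal.ofReal_le_of_le_toReal (hq.2.2 j)

lemma mul_cond_univ_of_le [IsFiniteMeasure ρ] {s : Set α} {a : ℝ≥0∞} (h : a ≤ ρ s) :
    a * ρ[|s] univ = a := by
  rcases eq_or_ne (ρ s) 0 with hs | hs
  · rw [le_zero_iff.1 (h.trans hs.le), zero_mul]
  · have := cond_isProbabilityMeasure (μ := ρ) hs
    rw [measure_univ, mul_one]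

variable [MeasurableSpace ι] [DiscreteMeasurableSpace ι]

def cellMass (X : α → ι) (γ : Measure (α × α)) (p : ι × ι) : ℝ :=
  (γ.map (Prod.map X X)).real {p}

lemma sum_cellMass (hX : Measurable X) [IsFiniteMeasure γ] :
    ∑ p, cellMass X γ p = γ.real univ := by
  simp only [cellMass]
  rw [sum_measureReal_singleton, Finset.coe_univ, map_measureReal_apply (hX.prodMap hX)
    MeasurableSet.univ, preimage_univ]

lemma integral_comp_prodMap (hX : Measurable X) [IsFiniteMeasure γ] (w : ι × ι → ℝ) :
    ∫ z, w (X z.1, X z.2) ∂γ = ∑ p, cellMass X γ p * w p := by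
  change ∫ z, w (Prod.map X X z) ∂γ = _
  rw [← integral_map (hX.prodMap hX).aemeasurable
    (Measurable.of_discrete (f := w)).aestronglyMeasurable, integral_fintype Integrable.of_finite]
  simp [cellMass, mul_comm]

lemma integrable_comp_prodMap (hX : Measurable X) [IsFiniteMeasure γ] (w : ι × ι → ℝ) :
    Integrable (fun z => w (X z.1, X z.2)) γ :=
  (Integrable.of_finite (f := w)).comp_measurable (hX.prodMap hX)

lemma sum_cellMass_fst (hX : Measurable X) (h : γ.map Prod.fst = ρ) [IsFiniteMeasure γ] (i : ι) :
    ∑ j, cellMass X γ (i, j) = ρ.real (X ⁻¹' {i}) := by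
  have hmap : (γ.map (Prod.map X X)).map Prod.fst = ρ.map X := by
    rw [← h, Measure.map_map measurable_fst (hX.prodMap hX), Measure.map_map hX measurable_fst]
    rfl
  have : ∑ j, cellMass X γ (i, j) = ∑ p ∈ {i} ×ˢ Finset.univ, cellMass X γ p := by
    rw [Finset.sum_product, Finset.sum_singleton]
  rw [this]
  simp only [cellMass]
  rw [sum_measureReal_singleton, Finset.coe_product, Finset.coe_singleton, Finset.coe_univ,
    prod_univ, ← map_measureReal_apply measurable_fst (measurableSet_singleton i), hmap,
    map_measureReal_apply hX (measurableSet_singleton i)]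

lemma sum_cellMass_snd (hX : Measurable X) (h : γ.map Prod.snd = μ) [IsFiniteMeasure γ] (j : ι) :
    ∑ i, cellMass X γ (i, j) = μ.real (X ⁻¹' {j}) := by
  have hmap : (γ.map (Prod.map X X)).map Prod.snd = μ.map X := by
    rw [← h, Measure.map_map measurable_snd (hX.prodMap hX), Measure.map_map hX measurable_snd]
    rfl
  have : ∑ i, cellMass X γ (i, j) = ∑ p ∈ Finset.univ ×ˢ {j}, cellMass X γ p := by
    rw [Finset.sum_product_right, Finset.sum_singleton]
  rw [this]
  simp only [cellMass]
  rw [sum_measureReal_singleton, Finset.coe_product, Finset.coe_singleton, Finset.coe_univ,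
    univ_prod, ← map_measureReal_apply measurable_snd (measurableSet_singleton j), hmap,
    map_measureReal_apply hX (measurableSet_singleton j)]

lemma isSubPlan_cellMass (hX : Measurable X) (hγ : γ ∈ Couplings ρ μ) [IsFiniteMeasure γ] :
    IsSubPlan ρ μ X (cellMass X γ) :=
  ⟨fun _ => measureReal_nonneg, fun i => (sum_cellMass_fst hX hγ.1 i).le,
    fun j => (sum_cellMass_snd hX hγ.2 j).le⟩

lemma measurableSet_isSubPlan (hX : Measurable X) (μ : Measure α) (q : ι × ι → ℝ) :
    MeasurableSet {ρ : Measure α | IsSubPlan ρ μ X q} := by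
  simp only [IsSubPlan, ofPred_and, ofPred_forall]
  refine (MeasurableSet.iInter fun _ => .const _).inter
    ((MeasurableSet.iInter fun i => measurableSet_le measurable_const ?_).inter
      (MeasurableSet.iInter fun _ => .const _))
  exact (Measure.measurable_coe (hX (measurableSet_singleton i))).ennreal_toReal

lemma sum_smul_cond_le (hX : Measurable X) [IsFiniteMeasure ρ] {a : ι → ℝ≥0∞}
    (ha : ∀ i, a i ≤ ρ (X ⁻¹' {i})) : ∑ i, a i • ρ[|X ← i] ≤ ρ :=
  calc ∑ i, a i • ρ[|X ← i] ≤ ∑ i, ρ (X ⁻¹' {i}) • ρ[|X ← i] :=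
        Finset.sum_le_sum fun i _ => by gcongr; exact ha i
    _ = ρ := sum_meas_smul_cond_fiber hX ρ

lemma map_fst_discretePlan_le (hX : Measurable X) [IsFiniteMeasure ρ]
    (hq : IsSubPlan ρ μ X q) : (discretePlan ρ μ X q).map Prod.fst ≤ ρ :=
  calc (discretePlan ρ μ X q).map Prod.fst
      = ∑ p : ι × ι, (ENNReal.ofReal (q p) * μ[|X ← p.2] univ) • ρ[|X ← p.1] := by
        rw [discretePlan, Measure.map_finset_sum measurable_fst.aemeasurable]
        simp_rw [Measure.map_smul, Measure.map_fst_prod, smul_smul]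
    _ ≤ ∑ p : ι × ι, ENNReal.ofReal (q p) • ρ[|X ← p.1] :=
        Finset.sum_le_sum fun p _ => by gcongr; exact mul_le_of_le_one_right' prob_le_one
    _ = ∑ i, (∑ j, ENNReal.ofReal (q (i, j))) • ρ[|X ← i] := by
        simp_rw [Fintype.sum_prod_type, Finset.sum_smul]
    _ ≤ ρ := sum_smul_cond_le hX hq.sum_ofReal_fst_le

lemma map_snd_discretePlan_le (hX : Measurable X) [IsFiniteMeasure μ]
    (hq : IsSubPlan ρ μ X q) : (discretePlan ρ μ X q).map Prod.snd ≤ μ :=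
  calc (discretePlan ρ μ X q).map Prod.snd
      = ∑ p : ι × ι, (ENNReal.ofReal (q p) * ρ[|X ← p.1] univ) • μ[|X ← p.2] := by
        rw [discretePlan, Measure.map_finset_sum measurable_snd.aemeasurable]
        simp_rw [Measure.map_smul, Measure.map_snd_prod, smul_smul]
    _ ≤ ∑ p : ι × ι, ENNReal.ofReal (q p) • μ[|X ← p.2] :=
        Finset.sum_le_sum fun p _ => by gcongr; exact mul_le_of_le_one_right' prob_le_one
    _ = ∑ j, (∑ i, ENNReal.ofReal (q (i, j))) • μ[|X ← j] := by
        simp_rw [Fintype.sum_prod_type_right, Finset.sum_smul]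
    _ ≤ μ := sum_smul_cond_le hX hq.sum_ofReal_snd_le

lemma cond_preimage_singleton_self (hX : Measurable X) (i : ι) :
    ρ[|X ← i] (X ⁻¹' {i}) = ρ[|X ← i] univ := by
  rw [cond_apply (hX (measurableSet_singleton i)), cond_apply (hX (measurableSet_singleton i)),
    inter_self, inter_univ]

lemma cond_preimage_singleton_of_ne (hX : Measurable X) {i j : ι} (h : i ≠ j) :
    ρ[|X ← i] (X ⁻¹' {j}) = 0 := by
  rw [cond_apply (hX (measurableSet_singleton i)), ← preimage_inter,
    (singleton_inter_eq_empty (s := {j})).2 h, preimage_empty, measure_empty, mul_zero]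

lemma cellMass_discretePlan (hX : Measurable X) [IsFiniteMeasure ρ] [IsFiniteMeasure μ]
    (hq : IsSubPlan ρ μ X q) : cellMass X (discretePlan ρ μ X q) = q := by
  funext p
  have hcell : Prod.map X X ⁻¹' {p} = (X ⁻¹' {p.1}) ×ˢ (X ⁻¹' {p.2}) := by
    rw [← preimage_prod_map_prod, singleton_prod_singleton]
  have hsum : discretePlan ρ μ X q (Prod.map X X ⁻¹' {p}) =
      ENNReal.ofReal (q p) * (ρ[|X ← p.1] univ * μ[|X ← p.2] univ) := by
    rw [hcell, discretePlan, Measure.coe_finsetSum, Finset.sum_apply,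
      Finset.sum_eq_single p (fun p' _ hp' => ?_) (by simp)]
    · simp [Measure.prod_prod, cond_preimage_singleton_self hX]
    · rcases ne_or_eq p'.1 p.1 with h | h
      · simp [Measure.prod_prod, cond_preimage_singleton_of_ne hX h]
      · have h' : p'.2 ≠ p.2 := fun h' => hp' (Prod.ext h h')
        simp [Measure.prod_prod, cond_preimage_singleton_of_ne hX h']
  -- entries of a sub-plan vanish on null cells, where the conditional measures have mass `0`
  rw [cellMass, map_measureReal_apply (hX.prodMap hX) (measurableSet_singleton p), measureReal_def,
    hsum, ← mul_assoc, mul_cond_univ_of_le ((Finset.single_le_sum (fun _ _ => zero_le)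
      (Finset.mem_univ p.2)).trans (hq.sum_ofReal_fst_le p.1)), mul_cond_univ_of_le
      ((Finset.single_le_sum (fun _ _ => zero_le) (Finset.mem_univ p.1)).trans
        (hq.sum_ofReal_snd_le p.2)), ENNReal.toReal_ofReal (hq.1 p)]

end SubPlans

lemma exists_rat_le_sum_sub_le {κ : Type*} [Fintype κ] (x : κ → ℝ) (hx : ∀ k, 0 ≤ x k)
    {θ : ℝ} (hθ : 0 < θ) :
    ∃ q : κ → ℚ, (∀ k, 0 ≤ (q k : ℝ)) ∧ (∀ k, (q k : ℝ) ≤ x k) ∧ ∑ k, (x k - q k) ≤ θ := by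
  set θ' := θ / (Fintype.card κ + 1)
  have hθ' : 0 < θ' := by positivity
  have hentry : ∀ k, ∃ r : ℚ, 0 ≤ (r : ℝ) ∧ (r : ℝ) ≤ x k ∧ x k - r ≤ θ' := by
    intro k
    obtain ⟨r, hr₁, hr₂⟩ := exists_rat_btwn (sub_lt_self (x k) hθ')
    refine ⟨max r 0, ?_, ?_, ?_⟩ <;> push_cast
    · exact le_max_right _ _
    · exact max_le hr₂.le (hx k)
    · linarith [le_max_left (r : ℝ) 0]
  choose q hq₀ hqx hqθ using hentry
  refine ⟨q, hq₀, hqx, ?_⟩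
  calc ∑ k, (x k - q k) ≤ ∑ _k : κ, θ' := Finset.sum_le_sum fun k _ => hqθ k
    _ = Fintype.card κ / (Fintype.card κ + 1) * θ := by
        rw [Finset.sum_const, Finset.card_univ, nsmul_eq_mul]; ring
    _ ≤ 1 * θ := by gcongr; rw [div_le_one (by positivity)]; linarith
    _ = θ := one_mul θ

section Quantization

variable {E : Type*} [NormedAddCommGroup E] {ι : Type*} [Fintype ι]
  {c : ι → E} {δ R : ℝ} {q π : ι × ι → ℝ}

/-- Bounds the cost of `q` and of any completion of it when points lie within `δ` of the
centres `c` of their cells: points of cells `i`, `j` are within `‖c i - c j‖ + 2δ`, and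
unmatched mass costs at most `(2R)²`. -/
def planCost (c : ι → E) (δ R : ℝ) (q : ι × ι → ℝ) : ℝ :=
  ∑ p, q p * (‖c p.1 - c p.2‖ + 2 * δ) ^ 2 + (2 * R) ^ 2 * (1 - ∑ p, q p)

lemma planCost_le_add (hle : ∀ p, q p ≤ π p) :
    planCost c δ R q ≤ planCost c δ R π + (2 * R) ^ 2 * ∑ p, (π p - q p) := by
  have : ∑ p, q p * (‖c p.1 - c p.2‖ + 2 * δ) ^ 2 ≤ ∑ p, π p * (‖c p.1 - c p.2‖ + 2 * δ) ^ 2 :=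
    Finset.sum_le_sum fun p _ => by gcongr; exact hle p
  rw [planCost, planCost, Finset.sum_sub_distrib]
  linarith

variable [MeasurableSpace E] [OpensMeasurableSpace E] [SecondCountableTopology E]
  [MeasurableSpace ι] [DiscreteMeasurableSpace ι]
  {ρ μ : Measure E} {γ : Measure (E × E)} {X : E → ι}

lemma transportCost_le_sum_cellMass (hX : Measurable X)
    (hc : ∀ x ∈ closedBall (0 : E) R, ‖x - c (X x)‖ ≤ δ) [IsFiniteMeasure γ]
    (hK : ∀ᵐ z ∂γ, z.1 ∈ closedBall (0 : E) R ∧ z.2 ∈ closedBall (0 : E) R) :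
    transportCost γ ≤ ∑ p, cellMass X γ p * (‖c p.1 - c p.2‖ + 2 * δ) ^ 2 := by
  rw [← integral_comp_prodMap hX]
  refine integral_mono_ae (integrable_norm_sub_sq (b := 2 * R)
    (hK.mono fun z hz => norm_sub_le_of_mem_closedBall hz.1 hz.2))
    (integrable_comp_prodMap hX fun p => (‖c p.1 - c p.2‖ + 2 * δ) ^ 2) ?_
  filter_upwards [hK] with z hz
  have := (abs_sub_le_iff.1 (abs_norm_sub_sub_norm_sub_le (hc _ hz.1) (hc _ hz.2))).1
  exact pow_le_pow_left₀ (norm_nonneg _) (by linarith) 2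

lemma sum_cellMass_le_transportCost_add (hX : Measurable X)
    (hc : ∀ x ∈ closedBall (0 : E) R, ‖x - c (X x)‖ ≤ δ) [IsFiniteMeasure γ]
    (hK : ∀ᵐ z ∂γ, z.1 ∈ closedBall (0 : E) R ∧ z.2 ∈ closedBall (0 : E) R) :
    ∑ p, cellMass X γ p * (‖c p.1 - c p.2‖ + 2 * δ) ^ 2 ≤
      transportCost γ + 16 * δ * (R + δ) * γ.real univ := by
  have hb := hK.mono fun z hz => norm_sub_le_of_mem_closedBall hz.1 hz.2
  rw [← integral_comp_prodMap hX]
  calc ∫ z, (‖c (X z.1) - c (X z.2)‖ + 2 * δ) ^ 2 ∂γ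
      ≤ ∫ z, (‖z.1 - z.2‖ ^ 2 + 16 * δ * (R + δ)) ∂γ :=
        integral_mono_ae (integrable_comp_prodMap hX fun p => (‖c p.1 - c p.2‖ + 2 * δ) ^ 2)
          ((integrable_norm_sub_sq hb).add (integrable_const _)) ?_
    _ = transportCost γ + 16 * δ * (R + δ) * γ.real univ := by
        rw [integral_add (integrable_norm_sub_sq hb) (integrable_const _), integral_const,
          smul_eq_mul, mul_comm (γ.real univ)]
        rfl
  filter_upwards [hK] with z hz
  have hδ : 0 ≤ δ := (norm_nonneg _).trans (hc _ hz.1)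
  have h₁ := (abs_sub_le_iff.1 (abs_norm_sub_sub_norm_sub_le (hc _ hz.1) (hc _ hz.2))).2
  have h₂ := norm_sub_le_of_mem_closedBall hz.1 hz.2
  have h₃ : (‖c (X z.1) - c (X z.2)‖ + 2 * δ) ^ 2 ≤ (‖z.1 - z.2‖ + 4 * δ) ^ 2 :=
    pow_le_pow_left₀ (by positivity) (by linarith) 2
  nlinarith [norm_nonneg (z.1 - z.2)]

theorem minCost_le_planCost (hX : Measurable X)
    (hc : ∀ x ∈ closedBall (0 : E) R, ‖x - c (X x)‖ ≤ δ)
    [IsProbabilityMeasure ρ] [IsProbabilityMeasure μ]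
    (hρ : ρ (closedBall 0 R)ᶜ = 0) (hμ : μ (closedBall 0 R)ᶜ = 0) (hq : IsSubPlan ρ μ X q) :
    minCost ρ μ ≤ planCost c δ R q := by
  have h₁ := map_fst_discretePlan_le hX hq
  have h₂ := map_snd_discretePlan_le hX hq
  have := isFiniteMeasure_of_map_fst_le h₁
  calc minCost ρ μ ≤ transportCost (discretePlan ρ μ X q) +
        (2 * R) ^ 2 * (1 - (discretePlan ρ μ X q).real univ) :=
        minCost_le_transportCost_add hρ hμ h₁ h₂
    _ ≤ planCost c δ R q := by
        rw [planCost, ← sum_cellMass hX, cellMass_discretePlan hX hq]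
        gcongr
        simpa only [cellMass_discretePlan hX hq] using
          transportCost_le_sum_cellMass hX hc (ae_mem_closedBall_of_map_le hρ hμ h₁ h₂)

theorem exists_rat_isSubPlan_planCost_le (hX : Measurable X)
    (hc : ∀ x ∈ closedBall (0 : E) R, ‖x - c (X x)‖ ≤ δ)
    [IsProbabilityMeasure ρ] [IsProbabilityMeasure μ]
    (hρ : ρ (closedBall 0 R)ᶜ = 0) (hμ : μ (closedBall 0 R)ᶜ = 0) {η : ℝ} (hη : 0 < η) :
    ∃ q : ι × ι → ℚ, IsSubPlan ρ μ X (fun p => q p) ∧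
      planCost c δ R (fun p => q p) ≤ minCost ρ μ + 16 * δ * (R + δ) + η := by
  obtain ⟨γ, hγ, hcost⟩ := exists_mem_couplings_transportCost_lt ⟨_, prod_mem_couplings⟩
    (lt_add_of_pos_right (minCost ρ μ) (half_pos hη))
  have : IsProbabilityMeasure γ := ⟨by rw [measure_univ_of_mem_couplings hγ, measure_univ]⟩
  set θ := η / (2 * ((2 * R) ^ 2 + 1))
  obtain ⟨q, hq₀, hqπ, hqθ⟩ := exists_rat_le_sum_sub_le (cellMass X γ)
    (fun _ => measureReal_nonneg) (θ := θ) (by positivity)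
  have hπ : planCost c δ R (cellMass X γ) ≤ transportCost γ + 16 * δ * (R + δ) := by
    have := sum_cellMass_le_transportCost_add hX hc
      (ae_mem_closedBall_of_map_le hρ hμ hγ.1.le hγ.2.le)
    rw [planCost, sum_cellMass hX]
    simpa using this
  have hθ : (2 * R) ^ 2 * θ ≤ η / 2 := by
    rw [mul_div_assoc', div_le_div_iff₀ (by positivity) two_pos]
    nlinarith
  refine ⟨q, (isSubPlan_cellMass hX hγ).mono hq₀ hqπ, ?_⟩
  calc planCost c δ R (fun p => q p)
      ≤ planCost c δ R (cellMass X γ) + (2 * R) ^ 2 * ∑ p, (cellMass X γ p - q p) :=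
        planCost_le_add hqπ
    _ ≤ transportCost γ + 16 * δ * (R + δ) + (2 * R) ^ 2 * θ := by gcongr
    _ ≤ minCost ρ μ + 16 * δ * (R + δ) + η := by linarith

end Quantization

lemma exists_measurable_eqOn_of_approx {α : Type*} [MeasurableSpace α] {f : α → ℝ} {S : Set α}
    (hf : ∀ x ∈ S, 0 ≤ f x)
    (h : ∀ ε > 0, ∃ G : α → ℝ≥0∞, Measurable G ∧
      ∀ x ∈ S, ENNReal.ofReal (f x) ≤ G x ∧ G x ≤ ENNReal.ofReal (f x + ε)) :
    ∃ g : α → ℝ, Measurable g ∧ EqOn g f S := by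
  choose G hGm hG using fun n : ℕ => h (1 / (n + 1)) Nat.one_div_pos_of_nat
  refine ⟨fun x => (⨅ n, G n x).toReal, (Measurable.iInf hGm).ennreal_toReal, fun x hx => ?_⟩
  have hlim : Filter.Tendsto (fun n : ℕ => ENNReal.ofReal (f x + 1 / (n + 1))) Filter.atTop
      (nhds (ENNReal.ofReal (f x))) := by
    simpa using ENNReal.tendsto_ofReal
      (tendsto_const_nhds.add tendsto_one_div_add_atTop_nhds_zero_nat)
  have : ⨅ n, G n x = ENNReal.ofReal (f x) :=
    le_antisymm (ge_of_tendsto' hlim fun n => iInf_le_of_le n (hG n x hx).2)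
      (le_iInf fun n => (hG n x hx).1)
  simp only [this, ENNReal.toReal_ofReal (hf x hx)]

lemma exists_measurable_quantizer {E : Type*} [NormedAddCommGroup E] [MeasurableSpace E]
    [OpensMeasurableSpace E] [SecondCountableTopology E] {K : Set E} (hK : IsCompact K)
    {δ : ℝ} (hδ : 0 < δ) :
    ∃ (n : ℕ) (X : E → Fin n) (c : Fin n → E), Measurable X ∧ ∀ x ∈ K, ‖x - c (X x)‖ ≤ δ := by
  set e := TopologicalSpace.denseSeq E
  obtain ⟨t, ht⟩ := hK.elim_finite_subcover (fun k => ball (e k) δ) (fun _ => isOpen_ball)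
    fun x _ => mem_iUnion.2 ((TopologicalSpace.denseRange_denseSeq E).exists_dist_lt x hδ)
  set N := t.sup id
  refine ⟨N + 1, fun x => ⟨SimpleFunc.nearestPtInd e N x,
    Nat.lt_succ_of_le (SimpleFunc.nearestPtInd_le e N x)⟩, fun k => e k, ?_, ?_⟩
  · refine measurable_to_countable' fun k => ?_
    convert SimpleFunc.measurableSet_fiber (SimpleFunc.nearestPtInd e N) k using 1
    ext x
    simp [Fin.ext_iff]
  · intro x hx
    obtain ⟨k, hk, hxk⟩ := mem_iUnion₂.1 (ht hx)
    have := SimpleFunc.edist_nearestPt_le e x (Finset.le_sup (f := id) hk)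
    rw [edist_dist, edist_dist, ENNReal.ofReal_le_ofReal_iff dist_nonneg] at this
    rw [← dist_eq_norm, dist_comm]
    exact this.trans (dist_comm x (e k) ▸ (mem_ball.1 hxk).le)

section Measurability

variable {E : Type*} [NormedAddCommGroup E] [MeasurableSpace E]
  {ι : Type*} [Fintype ι] [MeasurableSpace ι] [DiscreteMeasurableSpace ι]
  {ρ μ : Measure E} {X : E → ι} {c : ι → E} {δ R : ℝ}

open Classical in
/-- Restricting to rational sub-plans makes this a countable infimum, hence measurable in `ρ`. -/
def ratPlanValue (μ : Measure E) (X : E → ι) (c : ι → E) (δ R : ℝ) (ρ : Measure E) : ℝ≥0∞ :=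
  ⨅ q : ι × ι → ℚ, if IsSubPlan ρ μ X (fun p => q p) then
    ENNReal.ofReal (planCost c δ R fun p => q p) else ⊤

lemma measurable_ratPlanValue (hX : Measurable X) :
    Measurable (ratPlanValue μ X c δ R) :=
  Measurable.iInf fun _ => Measurable.ite (measurableSet_isSubPlan hX μ _) measurable_const
    measurable_const

variable [OpensMeasurableSpace E] [SecondCountableTopology E]

lemma ofReal_minCost_le_ratPlanValue (hX : Measurable X)
    (hc : ∀ x ∈ closedBall (0 : E) R, ‖x - c (X x)‖ ≤ δ)
    [IsProbabilityMeasure ρ] [IsProbabilityMeasure μ]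
    (hρ : ρ (closedBall 0 R)ᶜ = 0) (hμ : μ (closedBall 0 R)ᶜ = 0) :
    ENNReal.ofReal (minCost ρ μ) ≤ ratPlanValue μ X c δ R ρ := by
  refine le_iInf fun q => ?_
  split_ifs with hq
  · exact ENNReal.ofReal_le_ofReal (minCost_le_planCost hX hc hρ hμ hq)
  · exact le_top

lemma ratPlanValue_le (hX : Measurable X) (hc : ∀ x ∈ closedBall (0 : E) R, ‖x - c (X x)‖ ≤ δ)
    [IsProbabilityMeasure ρ] [IsProbabilityMeasure μ]
    (hρ : ρ (closedBall 0 R)ᶜ = 0) (hμ : μ (closedBall 0 R)ᶜ = 0) {η : ℝ} (hη : 0 < η) :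
    ratPlanValue μ X c δ R ρ ≤ ENNReal.ofReal (minCost ρ μ + 16 * δ * (R + δ) + η) := by
  obtain ⟨q, hq, hcost⟩ := exists_rat_isSubPlan_planCost_le hX hc hρ hμ hη
  refine iInf_le_of_le q ?_
  rw [if_pos hq]
  exact ENNReal.ofReal_le_ofReal hcost

theorem exists_measurable_eqOn_minCost [ProperSpace E] (hR : 0 ≤ R) [IsProbabilityMeasure μ]
    (hμ : μ (closedBall 0 R)ᶜ = 0) :
    ∃ g : Measure E → ℝ, Measurable g ∧ EqOn g (fun ρ => minCost ρ μ)
      {ρ | IsProbabilityMeasure ρ ∧ ρ (closedBall 0 R)ᶜ = 0} := by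
  refine exists_measurable_eqOn_of_approx (fun ρ _ => minCost_nonneg ρ μ) fun ε hε => ?_
  obtain ⟨δ, hδ, hδε⟩ : ∃ δ > 0, 16 * δ * (R + δ) ≤ ε / 2 := by
    refine ⟨min 1 (ε / (32 * (R + 1))), by positivity, ?_⟩
    have h₁ := min_le_left 1 (ε / (32 * (R + 1)))
    have h₂ := (le_div_iff₀ (by positivity)).1 (min_le_right 1 (ε / (32 * (R + 1))))
    nlinarith [le_min zero_le_one (by positivity : 0 ≤ ε / (32 * (R + 1)))]
  obtain ⟨n, X, c, hX, hc⟩ := exists_measurable_quantizer (isCompact_closedBall (0 : E) R) hδ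
  refine ⟨ratPlanValue μ X c δ R, measurable_ratPlanValue hX, fun ρ ⟨hρ₁, hρ₂⟩ => ?_⟩
  exact ⟨ofReal_minCost_le_ratPlanValue hX hc hρ₂ hμ, (ratPlanValue_le hX hc hρ₂ hμ
    (half_pos hε)).trans (ENNReal.ofReal_le_ofReal (by linarith))⟩

end Measurability

section Variance

variable {d : ℕ} {R : ℝ} {P : Measure (Measure (Euc d))} {ν ν' : Measure (Euc d)}

lemma integrable_W2_sq (hR : 0 ≤ R) (hP : PProbOn (closedBall (0 : Euc d) R) P)
    (hν : ProbOn (closedBall (0 : Euc d) R) ν) : Integrable (fun ρ => W2 ρ ν ^ 2) P := by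
  have := hP.1
  have := hν.1
  have hae : ∀ᵐ ρ ∂P, ProbOn (closedBall (0 : Euc d) R) ρ := ae_iff.2 hP.2
  obtain ⟨g, hg, hgeq⟩ := exists_measurable_eqOn_minCost hR hν.2
  refine Integrable.mono' (integrable_const ((2 * R) ^ 2))
    (hg.aestronglyMeasurable.congr ?_) ?_
  · filter_upwards [hae] with ρ hρ
    rw [W2_sq_eq_minCost]
    exact hgeq hρ
  · filter_upwards [hae] with ρ hρ
    have := hρ.1
    rw [Real.norm_of_nonneg (by positivity), W2_sq_eq_minCost]
    exact minCost_le_sq hρ.2 hν.2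

lemma integral_half_mul_sub_W2_sq (hR : 0 ≤ R) (hP : PProbOn (closedBall (0 : Euc d) R) P)
    (hν : ProbOn (closedBall (0 : Euc d) R) ν) (hν' : ProbOn (closedBall (0 : Euc d) R) ν') :
    ∫ ρ, (1 / 2) * (W2 ρ ν ^ 2 - W2 ρ ν' ^ 2) ∂P = Fvar P ν - Fvar P ν' := by
  rw [integral_const_mul, integral_sub (integrable_W2_sq hR hP hν) (integrable_W2_sq hR hP hν'),
    Fvar, Fvar]
  ring

end Variance

theorem stability_from_strong_convexity_general
    (d : ℕ) (R : ℝ) (hR : 0 < R) (P Q : Measure (Measure (Euc d)))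
    (hP : PProbOn (closedBall (0 : Euc d) R) P)
    (hQ : PProbOn (closedBall (0 : Euc d) R) Q)
    (μP μQ : Measure (Euc d))
    (hμP : IsBary (closedBall (0 : Euc d) R) P μP)
    (hμQ : IsBary (closedBall (0 : Euc d) R) Q μQ)
    (α C : ℝ) (hC : 0 < C)
    (hsc : ∀ ν : Measure (Euc d), ProbOn (closedBall (0 : Euc d) R) ν →
      α * W2 μP ν ^ 6 ≤ C * (Fvar P ν - Fvar P μP)) :
    α * W2 μP μQ ^ 6 ≤
      C * ((∫ ρ, (1 / 2) * (W2 ρ μQ ^ 2 - W2 ρ μP ^ 2) ∂P) -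
        ∫ ρ, (1 / 2) * (W2 ρ μQ ^ 2 - W2 ρ μP ^ 2) ∂Q) := by
  rw [integral_half_mul_sub_W2_sq hR.le hP hμQ.1 hμP.1,
    integral_half_mul_sub_W2_sq hR.le hQ hμQ.1 hμP.1]
  have hQmin : Fvar Q μQ ≤ Fvar Q μP := hμQ.2 μP hμP.1
  calc α * W2 μP μQ ^ 6 ≤ C * (Fvar P μQ - Fvar P μP) := hsc μQ hμQ.1
    _ ≤ C * (Fvar P μQ - Fvar P μP - (Fvar Q μQ - Fvar Q μP)) :=
        mul_le_mul_of_nonneg_left (by linarith) hC.le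

/-- **Stability bound from strong convexity of the variance functional.**
If `μ_P` minimizes `F_P`, `μ_Q` minimizes `F_Q`, and `F_P` satisfies the
strong convexity estimate `α W₂⁶(μ_P, ν) ≤ C (F_P(ν) - F_P(μ_P))` at its
minimizer, then `α W₂⁶(μ_P, μ_Q) ≤ C ⟨½(W₂²(·,μ_Q) - W₂²(·,μ_P)), P - Q⟩`. -/
theorem stability_from_strong_convexity
    (d : ℕ) (R : ℝ) (hR : 0 < R) (P Q : Measure (Measure (Euc d)))
    (hP : PProbOn (closedBall (0 : Euc d) R) P)
    (hQ : PProbOn (closedBall (0 : Euc d) R) Q)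
    (μP μQ : Measure (Euc d))
    (hμP : IsBary (closedBall (0 : Euc d) R) P μP)
    (hμQ : IsBary (closedBall (0 : Euc d) R) Q μQ)
    (α C : ℝ) (hα : 0 < α) (hC : 0 < C)
    (hsc : ∀ ν : Measure (Euc d), ProbOn (closedBall (0 : Euc d) R) ν →
      α * W2 μP ν ^ 6 ≤ C * (Fvar P ν - Fvar P μP)) :
    α * W2 μP μQ ^ 6 ≤
      C * ((∫ ρ, (1 / 2) * (W2 ρ μQ ^ 2 - W2 ρ μP ^ 2) ∂P) -
        ∫ ρ, (1 / 2) * (W2 ρ μQ ^ 2 - W2 ρ μP ^ 2) ∂Q) :=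
  stability_from_strong_convexity_general d R hR P Q hP hQ μP μQ hμP hμQ α C hC hsc
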